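/- (Fluid queue-length formula.) Let ϑ ∈ I, let ζ be the unique fluid model solution with initial measure ϑ, let w be the unique workload fluid model solution with w(0) = w_ϑ, and define τ(t) = inf{s ∈ [0,t] : w(s) + s ≥ t}. Then for each 1 ≤ k ≤ K: if 0 ≤ t < w(0), then ζ_k(t)([0,∞)²) = ϑ_k([t,∞)×[t,∞)) + λ_k ∫_0^t G_k(a) da; and if t ≥ w(0), then ζ_k(t)([0,∞)²) = λ_k ∫_0^{w(τ(t))} G_k(a) da. -/

import Mathlib

open MeasureTheory Set Filter Topology
open scoped ENNReal

noncomputable section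

namespace OverloadedFIFO

/-- The complement `G(x) = Γ((x, ∞))` of the cumulative distribution function of `Γ`. -/
def Gk (Γ : MeasureTheory.Measure ℝ) (x : ℝ) : ℝ := (Γ (Set.Ioi x)).toReal

/-- Model data: `K` job classes with arrival rates `lam`, service rates `mu`, and
deadline (patience) distributions `Γ`, in the overloaded regime `ρ > 1`.  Each `Γ k` is a
Borel probability measure on `[0,∞)` (no mass on negatives), with continuous c.d.f.
(no atoms, in particular `Γ k {0} = 0`) and finite mean. -/
structure Data (K : ℕ) where
  lam : Fin K → ℝ
  mu : Fin K → ℝ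
  Γ : Fin K → MeasureTheory.Measure ℝ
  lam_pos : ∀ k, 0 < lam k
  mu_pos : ∀ k, 0 < mu k
  Γ_prob : ∀ k, MeasureTheory.IsProbabilityMeasure (Γ k)
  Γ_null_neg : ∀ k, Γ k (Set.Iio 0) = 0
  Γ_noAtom : ∀ k, ∀ x : ℝ, Γ k {x} = 0
  Γ_finite_mean : ∀ k, MeasureTheory.Integrable id (Γ k)
  rho_gt_one : 1 < ∑ k, lam k / mu k

instance {K : ℕ} (D : Data K) (k : Fin K) : IsProbabilityMeasure (D.Γ k) := D.Γ_prob k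

/-- `ρ_k = λ_k / μ_k`. -/
def Data.rho {K : ℕ} (D : Data K) (k : Fin K) : ℝ := D.lam k / D.mu k

/-- `ρ = Σ_k ρ_k`. -/
def Data.rhoTot {K : ℕ} (D : Data K) : ℝ := ∑ k, D.rho k

/-- A workload fluid model solution: a nonnegative function `w` on `[0,∞)` satisfying
`w(t) = w(0) + Σ_k ρ_k ∫_0^t G_k(w(s)) ds − t` for all `t ≥ 0`. -/
def IsWorkloadSol {K : ℕ} (D : Data K) (w : ℝ → ℝ) : Prop :=
  (∀ t : ℝ, 0 ≤ t → 0 ≤ w t) ∧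
  (∀ k : Fin K, ∀ t : ℝ, 0 ≤ t →
    IntervalIntegrable (fun s => Gk (D.Γ k) (w s)) volume 0 t) ∧
  (∀ t : ℝ, 0 ≤ t →
    w t = w 0 + (∑ k, D.rho k * ∫ s in (0:ℝ)..t, Gk (D.Γ k) (w s)) - t)

/-- `w_l = sup {u ≥ 0 : Σ_k ρ_k G_k(u) > 1}`. -/
def wl {K : ℕ} (D : Data K) : ℝ :=
  sSup {u : ℝ | 0 ≤ u ∧ 1 < ∑ k, D.rho k * Gk (D.Γ k) u}

/-- `w_u = sup {u ≥ 0 : Σ_k ρ_k G_k(u) ≥ 1}`. -/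
def wu {K : ℕ} (D : Data K) : ℝ :=
  sSup {u : ℝ | 0 ≤ u ∧ 1 ≤ ∑ k, D.rho k * Gk (D.Γ k) u}

/-- `d_max = max_k sup {x ≥ 0 : G_k(x) > 0} ∈ (0,∞]`, as an extended nonnegative real. -/
def dmax {K : ℕ} (D : Data K) : ℝ≥0∞ :=
  ⨆ k, sSup (ENNReal.ofReal '' {x : ℝ | 0 ≤ x ∧ 0 < Gk (D.Γ k) x})

/-- `τ(t) = inf {s ∈ [0,t] : w(s) + s ≥ t}`. -/
def tauF (w : ℝ → ℝ) (t : ℝ) : ℝ := sInf {s : ℝ | 0 ≤ s ∧ s ≤ t ∧ t ≤ w s + s}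

/-- The nonnegative quadrant `[0,∞)²`. -/
def Q : Set (ℝ × ℝ) := {p | 0 ≤ p.1 ∧ 0 ≤ p.2}

/-- The shift `B_x = {y ∈ [0,∞)² : y − x ∈ B}` of a set `B ⊆ [0,∞)²`. -/
def shift (B : Set (ℝ × ℝ)) (x : ℝ × ℝ) : Set (ℝ × ℝ) :=
  {y | y ∈ Q ∧ (y.1 - x.1, y.2 - x.2) ∈ B}

/-- Diagonal shift `B_t = B_{(t,t)}`. -/
def shiftd (B : Set (ℝ × ℝ)) (t : ℝ) : Set (ℝ × ℝ) := shift B (t, t)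

/-- The set `C = ([0,∞)×{0}) ∪ ({0}×[0,∞))`. -/
def Cset : Set (ℝ × ℝ) := {p | (0 ≤ p.1 ∧ p.2 = 0) ∨ (p.1 = 0 ∧ 0 ≤ p.2)}

/-- The `κ`-enlargement `B^κ = {x ∈ [0,∞)² : inf_{y ∈ B} ‖x−y‖ < κ}` (Euclidean norm). -/
def enlarge (B : Set (ℝ × ℝ)) (κ : ℝ) : Set (ℝ × ℝ) :=
  {x | x ∈ Q ∧ ∃ y ∈ B, Real.sqrt ((x.1 - y.1) ^ 2 + (x.2 - y.2) ^ 2) < κ}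

/-- `w_ϑ = sup {x ≥ 0 : ϑ_+([x,∞)×[0,∞)) > 0}` for a `K`-tuple `ϑ` of measures on `[0,∞)²`. -/
def wMeas {K : ℕ} (ϑ : Fin K → MeasureTheory.Measure (ℝ × ℝ)) : ℝ :=
  sSup {x : ℝ | 0 ≤ x ∧ 0 < ∑ k, ϑ k (Set.Ici x ×ˢ Set.Ici (0:ℝ))}

/-- Membership in the set `I` of admissible initial measures: each `ϑ k` is a finite Borel
measure on `[0,∞)²`; (I.1) the superposition charges no corner set `C_x`, `x ∈ [0,∞)²`;
(I.2) `w_ϑ < ∞`; (I.3) `max_k G_k(w_ϑ − ε) > 0` for every `ε > 0`. -/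
def MemI {K : ℕ} (D : Data K) (ϑ : Fin K → MeasureTheory.Measure (ℝ × ℝ)) : Prop :=
  (∀ k, IsFiniteMeasure (ϑ k)) ∧
  (∀ k, ϑ k Qᶜ = 0) ∧
  (∀ x ∈ Q, (∑ k, ϑ k (shift Cset x)) = 0) ∧
  BddAbove {x : ℝ | 0 ≤ x ∧ 0 < ∑ k, ϑ k (Set.Ici x ×ˢ Set.Ici (0:ℝ))} ∧
  (∀ ε : ℝ, 0 < ε → ∃ k, 0 < Gk (D.Γ k) (wMeas ϑ - ε))

/-- `δ⁺_w`: the Dirac measure at `w` if `w > 0`, and the zero measure otherwise. -/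
def deltaPlus (w : ℝ) : MeasureTheory.Measure ℝ :=
  if 0 < w then MeasureTheory.Measure.dirac w else 0

instance (w : ℝ) : SFinite (deltaPlus w) := by
  unfold deltaPlus; split_ifs <;> infer_instance

/-- `(δ⁺_w × Γ)(B)`, as a real number. -/
def kern (Γ : MeasureTheory.Measure ℝ) (w : ℝ) (B : Set (ℝ × ℝ)) : ℝ :=
  (((deltaPlus w).prod Γ) B).toReal

/-- A (measure-valued) fluid model solution with initial measure `ϑ`: a family
`ζ(t) = (ζ_1(t),…,ζ_K(t))` of finite Borel measures on `[0,∞)²` with `ζ(0) = ϑ` satisfying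
`ζ_k(t)(B) = ϑ_k(B_t) + λ_k ∫_0^t (δ⁺_{w(s)} × Γ_k)(B_{t−s}) ds` for every Borel
`B ⊆ [0,∞)²` and `t ≥ 0`, where `w` is the (unique) workload fluid model solution with
`w(0) = w_ϑ`. -/
def IsFluidSol {K : ℕ} (D : Data K) (ϑ : Fin K → MeasureTheory.Measure (ℝ × ℝ))
    (ζ : ℝ → Fin K → MeasureTheory.Measure (ℝ × ℝ)) : Prop :=
  ∃ w : ℝ → ℝ, IsWorkloadSol D w ∧ w 0 = wMeas ϑ ∧
    (∀ t : ℝ, 0 ≤ t → ∀ k, IsFiniteMeasure (ζ t k) ∧ ζ t k Qᶜ = 0) ∧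
    (∀ k, ζ 0 k = ϑ k) ∧
    (∀ k, ∀ B : Set (ℝ × ℝ), B ⊆ Q → MeasurableSet B → ∀ t : ℝ, 0 ≤ t →
      IntervalIntegrable (fun s => kern (D.Γ k) (w s) (shiftd B (t - s))) volume 0 t ∧
      ζ t k B = ϑ k (shiftd B t) +
        ENNReal.ofReal (D.lam k * ∫ s in (0:ℝ)..t, kern (D.Γ k) (w s) (shiftd B (t - s))))

/-- The candidate invariant state `θ^w`:
`θ^w_k(B) = λ_k ∫_0^w Γ_k({p ≥ u : (w−u, p−u) ∈ B}) du`. -/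
def thetaW {K : ℕ} (D : Data K) (w : ℝ) (k : Fin K) : MeasureTheory.Measure (ℝ × ℝ) :=
  ENNReal.ofReal (D.lam k) •
    MeasureTheory.Measure.map (fun up : ℝ × ℝ => (w - up.1, up.2 - up.1))
      ((((MeasureTheory.volume.restrict (Set.Ioo (0:ℝ) w))).prod (D.Γ k)).restrict
        {up : ℝ × ℝ | up.1 ≤ up.2})

/-!
An arrival at time `s` is still in the queue at time `t` iff it joined (`w(s) > 0`) and both its
residual workload `w(s) - (t - s)` and its residual patience are nonnegative. As `s ↦ w(s) + s` is
continuous and nondecreasing, `w(s) + s ≥ t` holds exactly for `s ∈ [τ(t), t]`, so substituting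
`u = t - s` the arrivals contribute `λ_k ∫_0^{t - τ(t)} G_k`. For `t < w(0)` we have
`τ(t) = 0`. For `t ≥ w(0)` we have `w(τ(t)) + τ(t) = t`, and the initial mass `ϑ_k([t,∞)²)`
vanishes: `ϑ` charges neither `[x,∞) × [0,∞)` for `x > w_ϑ` nor the vertical line
`{t} × [0,∞)` (condition (I.1)). The workload built into the fluid solution is `w` itself, by a
comparison argument.
-/

variable {K : ℕ}

instance (D : Data K) (k : Fin K) : NullSingletonClass (D.Γ k) := ⟨D.Γ_noAtom k⟩

lemma Gk_nonneg (Γ : Measure ℝ) (x : ℝ) : 0 ≤ Gk Γ x := ENNReal.toReal_nonneg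

lemma Gk_antitone (Γ : Measure ℝ) [IsFiniteMeasure Γ] : Antitone (Gk Γ) := fun _ _ hab =>
  ENNReal.toReal_mono (measure_ne_top _ _) (measure_mono (Ioi_subset_Ioi hab))

lemma Data.rho_nonneg (D : Data K) (k : Fin K) : 0 ≤ D.rho k :=
  (div_pos (D.lam_pos k) (D.mu_pos k)).le

namespace IsWorkloadSol

variable {D : Data K} {w w₁ w₂ : ℝ → ℝ} {a b t : ℝ}

lemma intervalIntegrable (hw : IsWorkloadSol D w) (k : Fin K) (ha : 0 ≤ a) (hb : 0 ≤ b) :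
    IntervalIntegrable (fun s => Gk (D.Γ k) (w s)) volume a b :=
  (hw.2.1 k a ha).symm.trans (hw.2.1 k b hb)

lemma add_sub_add_eq_sum_integral (hw : IsWorkloadSol D w) (ha : 0 ≤ a) (hb : 0 ≤ b) :
    (w b + b) - (w a + a) = ∑ k, D.rho k * ∫ s in a..b, Gk (D.Γ k) (w s) := by
  have hsplit : ∀ k,
      (∫ s in (0:ℝ)..b, Gk (D.Γ k) (w s)) - ∫ s in (0:ℝ)..a, Gk (D.Γ k) (w s)
        = ∫ s in a..b, Gk (D.Γ k) (w s) := fun k =>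
    intervalIntegral.integral_interval_sub_left (hw.2.1 k b hb) (hw.2.1 k a ha)
  simp only [← hsplit, mul_sub, Finset.sum_sub_distrib]
  linarith [hw.2.2 a ha, hw.2.2 b hb]

lemma monotoneOn_add_id (hw : IsWorkloadSol D w) : MonotoneOn (fun s => w s + s) (Ici 0) := by
  intro a ha b hb hab
  have hincr : 0 ≤ ∑ k, D.rho k * ∫ s in a..b, Gk (D.Γ k) (w s) :=
    Finset.sum_nonneg fun k _ => mul_nonneg (D.rho_nonneg k)
      (intervalIntegral.integral_nonneg hab fun s _ => Gk_nonneg _ _)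
  linarith [hw.add_sub_add_eq_sum_integral ha hb]

lemma continuousOn_add_id (hw : IsWorkloadSol D w) (ht : 0 ≤ t) :
    ContinuousOn (fun s => w s + s) (Icc 0 t) := by
  have hprim : ContinuousOn (fun s => w 0 + ∑ k, D.rho k * ∫ u in (0:ℝ)..s, Gk (D.Γ k) (w u))
      (Icc 0 t) := by
    rw [← uIcc_of_le ht]
    exact continuousOn_const.add <| continuousOn_finsetSum _ fun k _ =>
      continuousOn_const.mul <|
        intervalIntegral.continuousOn_primitive_interval' (hw.2.1 k t ht) left_mem_uIcc
  refine hprim.congr fun s hs => ?_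
  simp only [hw.2.2 s hs.1]
  ring

/-- A larger workload grows more slowly: fewer arrivals are patient enough to join. -/
lemma add_sub_add_le_of_le (h₁ : IsWorkloadSol D w₁) (h₂ : IsWorkloadSol D w₂)
    (ha : 0 ≤ a) (hab : a ≤ b) (hle : ∀ s ∈ Ioc a b, w₂ s ≤ w₁ s) :
    (w₁ b + b) - (w₁ a + a) ≤ (w₂ b + b) - (w₂ a + a) := by
  have hb := ha.trans hab
  rw [h₁.add_sub_add_eq_sum_integral ha hb, h₂.add_sub_add_eq_sum_integral ha hb]
  refine Finset.sum_le_sum fun k _ => mul_le_mul_of_nonneg_left ?_ (D.rho_nonneg k)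
  rw [intervalIntegral.integral_of_le hab, intervalIntegral.integral_of_le hab]
  exact setIntegral_mono_on (h₁.intervalIntegrable k ha hb).1 (h₂.intervalIntegrable k ha hb).1
    measurableSet_Ioc fun s hs => Gk_antitone _ (hle s hs)

lemma le_of_apply_zero_eq (h₁ : IsWorkloadSol D w₁) (h₂ : IsWorkloadSol D w₂)
    (h0 : w₁ 0 = w₂ 0) (ht : 0 ≤ t) : w₁ t ≤ w₂ t := by
  set S := {s ∈ Icc 0 t | w₁ s + s ≤ w₂ s + s}
  have hS : IsClosed S :=
    isClosed_Icc.isClosed_le (h₁.continuousOn_add_id ht) (h₂.continuousOn_add_id ht)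
  have hSbdd : BddAbove S := ⟨t, fun s hs => hs.1.2⟩
  obtain ⟨⟨ha0, hat⟩, haS⟩ : sSup S ∈ S :=
    hS.csSup_mem ⟨0, ⟨le_rfl, ht⟩, by simp [h0]⟩ hSbdd
  have hlt : ∀ s ∈ Ioc (sSup S) t, w₂ s ≤ w₁ s := fun s hs => by
    by_contra! h
    exact hs.1.not_ge (le_csSup hSbdd ⟨⟨ha0.trans hs.1.le, hs.2⟩, by linarith⟩)
  linarith [add_sub_add_le_of_le h₁ h₂ ha0 hat hlt]

lemma eqOn_Ici (h₁ : IsWorkloadSol D w₁) (h₂ : IsWorkloadSol D w₂) (h0 : w₁ 0 = w₂ 0) :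
    EqOn w₁ w₂ (Ici 0) := fun _ ht =>
  (h₁.le_of_apply_zero_eq h₂ h0 ht).antisymm (h₂.le_of_apply_zero_eq h₁ h0.symm ht)

end IsWorkloadSol

section tauF

variable {w : ℝ → ℝ} {s t : ℝ}

lemma tauF_eq_zero (ht : 0 ≤ t) (htw : t ≤ w 0) : tauF w t = 0 :=
  le_antisymm (csInf_le ⟨0, fun _ h => h.1⟩ ⟨le_rfl, ht, by simpa using htw⟩)
    (le_csInf ⟨0, le_rfl, ht, by simpa using htw⟩ fun _ h => h.1)

lemma tauF_mem (hcont : ContinuousOn (fun s => w s + s) (Icc 0 t)) (ht : 0 ≤ t)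
    (hwt : 0 ≤ w t) :
    0 ≤ tauF w t ∧ tauF w t ≤ t ∧ t ≤ w (tauF w t) + tauF w t := by
  have hclosed : IsClosed {s : ℝ | 0 ≤ s ∧ s ≤ t ∧ t ≤ w s + s} := by
    convert isClosed_Icc.isClosed_le (f := fun _ => t) continuousOn_const hcont using 1
    ext s
    simp only [mem_ofPred_eq, mem_Icc, and_assoc]
  exact hclosed.csInf_mem ⟨t, ht, le_rfl, by linarith⟩ ⟨0, fun _ h => h.1⟩

lemma add_lt_of_lt_tauF (hs0 : 0 ≤ s) (hst : s ≤ t) (hs : s < tauF w t) : w s + s < t := by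
  by_contra! h
  exact hs.not_ge (csInf_le ⟨0, fun _ h => h.1⟩ ⟨hs0, hst, h⟩)

lemma add_tauF_eq (hmono : MonotoneOn (fun s => w s + s) (Ici 0))
    (hcont : ContinuousOn (fun s => w s + s) (Icc 0 t)) (ht : 0 ≤ t) (htw : w 0 ≤ t)
    (hwt : 0 ≤ w t) : w (tauF w t) + tauF w t = t := by
  obtain ⟨hτ0, -, hτ⟩ := tauF_mem hcont ht hwt
  obtain ⟨c, ⟨hc0, hct⟩, hc⟩ :=
    intermediate_value_Icc ht hcont ⟨by simpa using htw, by simpa using hwt⟩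
  have hτc : tauF w t ≤ c := csInf_le ⟨0, fun _ h => h.1⟩ ⟨hc0, hct, hc.ge⟩
  linarith [hmono hτ0 hc0 hτc, hc]

end tauF

lemma shiftd_Q {t : ℝ} (ht : 0 ≤ t) : shiftd Q t = Ici t ×ˢ Ici t := by
  ext ⟨x, y⟩
  simp only [shiftd, shift, Q, mem_ofPred_eq, mem_prod, mem_Ici, sub_nonneg]
  constructor
  · exact fun h => h.2
  · exact fun h => ⟨⟨ht.trans h.1, ht.trans h.2⟩, h⟩

lemma measurableSet_Q : MeasurableSet Q :=
  (measurableSet_le measurable_const measurable_fst).inter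
    (measurableSet_le measurable_const measurable_snd)

lemma kern_shiftd_Q (Γ : Measure ℝ) [SFinite Γ] [NullSingletonClass Γ] (v : ℝ) {r : ℝ}
    (hr : 0 ≤ r) : kern Γ v (shiftd Q r) = if 0 < v ∧ r ≤ v then Gk Γ r else 0 := by
  rw [kern, shiftd_Q hr, Measure.prod_prod, measure_congr (Ioi_ae_eq_Ici (μ := Γ)).symm,
    deltaPlus]
  by_cases hv : 0 < v
  · by_cases hrv : r ≤ v <;> simp [hv, hrv, Gk]
  · simp [hv]

lemma integral_kern_shiftd_Q (Γ : Measure ℝ) [SFinite Γ] [NullSingletonClass Γ]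
    {w : ℝ → ℝ} {t : ℝ} (hmono : MonotoneOn (fun s => w s + s) (Ici 0))
    (hcont : ContinuousOn (fun s => w s + s) (Icc 0 t)) (ht : 0 ≤ t) (hwt : 0 ≤ w t) :
    ∫ s in (0:ℝ)..t, kern Γ (w s) (shiftd Q (t - s))
      = ∫ a in (0:ℝ)..(t - tauF w t), Gk Γ a := by
  obtain ⟨hτ0, hτt, hτ⟩ := tauF_mem hcont ht hwt
  have hae : ∀ᵐ u, u ∈ uIoc 0 t →
      kern Γ (w (t - u)) (shiftd Q u) = indicator {u | u ≤ t - tauF w t} (Gk Γ) u := by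
    filter_upwards [volume.ae_ne (t - tauF w t)] with u hu hmem
    rw [uIoc_of_le ht] at hmem
    rw [kern_shiftd_Q Γ _ hmem.1.le]
    rcases hu.lt_or_gt with hlt | hgt
    · have hge := hmono hτ0 (show 0 ≤ t - u by linarith) (show tauF w t ≤ t - u by linarith)
      rw [if_pos ⟨by linarith [hmem.1], by linarith⟩,
        indicator_of_mem (show u ∈ {u | u ≤ t - tauF w t} from hlt.le)]
    · have hlt := add_lt_of_lt_tauF (w := w) (by linarith [hmem.2]) (by linarith [hmem.1])
        (show t - u < tauF w t by linarith)
      rw [if_neg fun h => by linarith [h.2], indicator_of_notMem (by simpa using hgt)]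
  calc ∫ s in (0:ℝ)..t, kern Γ (w s) (shiftd Q (t - s))
      = ∫ u in (0:ℝ)..t, kern Γ (w (t - u)) (shiftd Q u) := by
        simpa using (intervalIntegral.integral_comp_sub_left
          (fun u => kern Γ (w (t - u)) (shiftd Q u)) (a := 0) (b := t) t)
    _ = ∫ u in (0:ℝ)..t, indicator {u | u ≤ t - tauF w t} (Gk Γ) u :=
        intervalIntegral.integral_congr_ae hae
    _ = ∫ a in (0:ℝ)..(t - tauF w t), Gk Γ a :=
        intervalIntegral.integral_indicator ⟨by linarith, by linarith⟩

lemma IsFluidSol.measure_Q {D : Data K} {ϑ : Fin K → Measure (ℝ × ℝ)}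
    {ζ : ℝ → Fin K → Measure (ℝ × ℝ)} {w : ℝ → ℝ} (hζ : IsFluidSol D ϑ ζ)
    (hw : IsWorkloadSol D w) (hw0 : w 0 = wMeas ϑ) (k : Fin K) {t : ℝ} (ht : 0 ≤ t) :
    ζ t k Q = ϑ k (Ici t ×ˢ Ici t) +
      ENNReal.ofReal (D.lam k * ∫ a in (0:ℝ)..(t - tauF w t), Gk (D.Γ k) a) := by
  obtain ⟨w', hw', hw'0, -, -, hζeq⟩ := hζ
  have hww' : EqOn w' w (Ici 0) := hw'.eqOn_Ici hw (hw'0.trans hw0.symm)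
  rw [(hζeq k Q subset_rfl measurableSet_Q t ht).2, shiftd_Q ht,
    ← integral_kern_shiftd_Q (D.Γ k) hw.monotoneOn_add_id (hw.continuousOn_add_id ht) ht
      (hw.1 t ht)]
  congr 3
  refine intervalIntegral.integral_congr fun s hs => ?_
  rw [uIcc_of_le ht] at hs
  simp only [hww' hs.1]

lemma wMeas_nonneg (ϑ : Fin K → Measure (ℝ × ℝ)) : 0 ≤ wMeas ϑ :=
  Real.sSup_nonneg fun _ h => h.1

lemma MemI.measure_Ici_prod_Ici_eq_zero {D : Data K} {ϑ : Fin K → Measure (ℝ × ℝ)}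
    (hϑ : MemI D ϑ) (k : Fin K) {t : ℝ} (ht : wMeas ϑ ≤ t) :
    ϑ k (Ici t ×ˢ Ici t) = 0 := by
  obtain ⟨-, -, hcorner, hbdd, -⟩ := hϑ
  have ht0 := (wMeas_nonneg ϑ).trans ht
  have hright : ∀ x, wMeas ϑ < x → ϑ k (Ici x ×ˢ Ici 0) = 0 := fun x hx => by
    have hsum : ∑ j, ϑ j (Ici x ×ˢ Ici 0) = 0 := by
      by_contra h
      exact hx.not_ge (le_csSup hbdd ⟨(wMeas_nonneg ϑ).trans hx.le, pos_iff_ne_zero.mpr h⟩)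
    exact Finset.sum_eq_zero_iff.mp hsum k (Finset.mem_univ k)
  have hIoi : Ioi t = ⋃ n : ℕ, Ici (t + 1 / (n + 1)) :=
    (iUnion_Ici_eq_Ioi_of_lt_of_tendsto (fun n => by simp only [lt_add_iff_pos_right]; positivity)
      (by simpa using tendsto_one_div_add_atTop_nhds_zero_nat.const_add t)).symm
  have hvert : ϑ k ({t} ×ˢ Ici 0) = 0 := by
    refine measure_mono_null ?_ (Finset.sum_eq_zero_iff.mp (hcorner (t, 0) ⟨ht0, le_rfl⟩) k
      (Finset.mem_univ k))
    rintro ⟨x, y⟩ ⟨rfl, hy⟩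
    exact ⟨⟨ht0, hy⟩, Or.inr ⟨sub_self x, by simpa using hy⟩⟩
  have hhoriz : ϑ k (Ioi t ×ˢ Ici 0) = 0 := by
    rw [hIoi, iUnion_prod_const]
    exact measure_iUnion_null fun n => hright _ (by
      have : (0:ℝ) < 1 / (n + 1) := by positivity
      linarith)
  refine measure_mono_null ?_ (measure_union_null hvert hhoriz)
  rintro ⟨x, y⟩ ⟨hx, hy⟩
  rcases (mem_Ici.mp hx).eq_or_lt with rfl | hlt
  · exact Or.inl ⟨rfl, ht0.trans hy⟩
  · exact Or.inr ⟨hlt, ht0.trans hy⟩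

/-- Fluid queue-length formula: for each `k`, if `0 ≤ t < w(0)` then
`ζ_k(t)([0,∞)²) = ϑ_k([t,∞)×[t,∞)) + λ_k ∫_0^t G_k(a) da`, and if `t ≥ w(0)` then
`ζ_k(t)([0,∞)²) = λ_k ∫_0^{w(τ(t))} G_k(a) da`. -/
theorem fluid_queue_length {K : ℕ} (D : Data K)
    (ϑ : Fin K → MeasureTheory.Measure (ℝ × ℝ)) (hϑ : MemI D ϑ)
    (ζ : ℝ → Fin K → MeasureTheory.Measure (ℝ × ℝ)) (hζ : IsFluidSol D ϑ ζ)
    (w : ℝ → ℝ) (hw : IsWorkloadSol D w) (hw0 : w 0 = wMeas ϑ) :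
    ∀ k,
      (∀ t : ℝ, 0 ≤ t → t < w 0 →
        ζ t k Q = ϑ k (Set.Ici t ×ˢ Set.Ici t) +
          ENNReal.ofReal (D.lam k * ∫ a in (0:ℝ)..t, Gk (D.Γ k) a)) ∧
      (∀ t : ℝ, w 0 ≤ t →
        ζ t k Q =
          ENNReal.ofReal (D.lam k * ∫ a in (0:ℝ)..(w (tauF w t)), Gk (D.Γ k) a)) := by
  intro k
  refine ⟨fun t ht htw => ?_, fun t htw => ?_⟩
  · rw [hζ.measure_Q hw hw0 k ht, tauF_eq_zero ht htw.le, sub_zero]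
  · have ht : 0 ≤ t := (hw.1 0 le_rfl).trans htw
    have hτ := add_tauF_eq hw.monotoneOn_add_id (hw.continuousOn_add_id ht) ht htw (hw.1 t ht)
    rw [hζ.measure_Q hw hw0 k ht, hϑ.measure_Ici_prod_Ici_eq_zero k (hw0 ▸ htw), zero_add,
      show t - tauF w t = w (tauF w t) by linarith]

end OverloadedFIFO
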